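/- arXiv:1810.12942 — 4 statements merged into one kernel-verified Lean document; each statement's English description precedes it below -/
import Mathlib

section
/- Let μ, γ > 0 and 0 < λ < 1, and let φ : [0, T̃] → ℝ solve the ODE φ' = -2μφ - γ(φ² + 1) with initial condition φ(0) = λ⁻¹, where T̃ = (1/(μr))·arctan( r(1-λ) / ( 2(λ/(1+λ))(γ/μ - 1) + 1 + λ ) ) with r = √|(γ/μ)² - 1|, in the case γ > μ. Then φ(τ) ∈ [λ, λ⁻¹] for all τ ∈ [0, T̃], and φ(T̃) = λ. -/
open Real Set

/-!
With `ω = μ r`, so that `ω² = γ² - μ²`, one has `(γx + μ)² + ω² = γ (γx² + 2μx + γ)`; hence along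
any solution the quantity `arctan ((γ φ + μ) / ω) / ω` decreases at unit speed. Since the right-hand
side `-(γφ² + 2μφ + γ)` is negative, `φ` is decreasing, and `T̃` is exactly the time
`(arctan ((γ/λ + μ)/ω) - arctan ((γλ + μ)/ω)) / ω` the conserved quantity needs to go from
`φ = λ⁻¹` to `φ = λ`, by the subtraction formula for `arctan`.
-/

section Riccati

variable {μ γ ω a b : ℝ} {φ : ℝ → ℝ}

lemma riccati_rhs_nonpos (hμγ : |μ| ≤ γ) (x : ℝ) : -2 * μ * x - γ * (x ^ 2 + 1) ≤ 0 := by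
  nlinarith [abs_le.1 hμγ, sq_nonneg (x - 1), sq_nonneg (x + 1), abs_nonneg μ]

lemma antitoneOn_of_riccati (hμγ : |μ| ≤ γ)
    (hode : ∀ τ ∈ Icc a b, HasDerivAt φ (-2 * μ * φ τ - γ * (φ τ ^ 2 + 1)) τ) :
    AntitoneOn φ (Icc a b) :=
  antitoneOn_of_hasDerivWithinAt_nonpos (convex_Icc a b)
    (fun τ hτ => (hode τ hτ).continuousAt.continuousWithinAt)
    (fun τ hτ => (hode τ (interior_subset hτ)).hasDerivWithinAt)
    (fun τ _ => riccati_rhs_nonpos hμγ (φ τ))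

lemma hasDerivAt_arctan_riccati (hω : ω ≠ 0) (hωsq : ω ^ 2 = γ ^ 2 - μ ^ 2) {τ : ℝ}
    (hφ : HasDerivAt φ (-2 * μ * φ τ - γ * (φ τ ^ 2 + 1)) τ) :
    HasDerivAt (fun t => arctan ((γ * φ t + μ) / ω) / ω) (-1) τ := by
  refine ((((hφ.const_mul γ).add_const μ).div_const ω).arctan.div_const ω).congr_deriv ?_
  have hpos : 0 < ω ^ 2 + (γ * φ τ + μ) ^ 2 := by positivity
  field_simp
  linear_combination hωsq

lemma arctan_riccati_add_eq (hω : ω ≠ 0) (hωsq : ω ^ 2 = γ ^ 2 - μ ^ 2)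
    (hode : ∀ τ ∈ Icc a b, HasDerivAt φ (-2 * μ * φ τ - γ * (φ τ ^ 2 + 1)) τ) :
    ∀ τ ∈ Icc a b, arctan ((γ * φ τ + μ) / ω) / ω + τ = arctan ((γ * φ a + μ) / ω) / ω + a := by
  have hderiv : ∀ τ ∈ Icc a b,
      HasDerivAt (fun t => arctan ((γ * φ t + μ) / ω) / ω + t) 0 τ := fun τ hτ =>
    ((hasDerivAt_arctan_riccati hω hωsq (hode τ hτ)).add (hasDerivAt_id' τ)).congr_deriv
      (neg_add_cancel 1)
  exact constant_of_has_deriv_right_zero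
    (fun τ hτ => (hderiv τ hτ).continuousAt.continuousWithinAt)
    (fun τ hτ => (hderiv τ (Ico_subset_Icc_self hτ)).hasDerivWithinAt)

end Riccati

lemma arctan_sub_arctan {x y : ℝ} (h : -1 < x * y) :
    arctan x - arctan y = arctan ((x - y) / (1 + x * y)) := by
  rw [sub_eq_add_neg, ← arctan_neg, arctan_add (by linarith)]
  ring_nf

lemma riccati_frequency_spec {μ γ : ℝ} (hμ : 0 < μ) (hμγ : μ < γ) :
    0 < √|(γ / μ) ^ 2 - 1| ∧ (μ * √|(γ / μ) ^ 2 - 1|) ^ 2 = γ ^ 2 - μ ^ 2 := by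
  have hsq_pos : 0 < (γ / μ) ^ 2 - 1 := by
    have : 1 < γ / μ := (one_lt_div hμ).2 hμγ
    nlinarith
  refine ⟨sqrt_pos.2 (abs_pos.2 hsq_pos.ne'), ?_⟩
  rw [mul_pow, sq_sqrt (abs_nonneg _), abs_of_pos hsq_pos]
  field_simp

lemma arctan_sub_arctan_riccati {μ γ r lam : ℝ} (hμ : 0 < μ) (hμγ : μ < γ) (hr : 0 < r)
    (hωsq : (μ * r) ^ 2 = γ ^ 2 - μ ^ 2) (hlam : 0 < lam) :
    arctan ((γ * lam⁻¹ + μ) / (μ * r)) - arctan ((γ * lam + μ) / (μ * r)) =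
      arctan (r * (1 - lam) / (2 * (lam / (1 + lam)) * (γ / μ - 1) + 1 + lam)) := by
  have hγ : 0 < γ := hμ.trans hμγ
  rw [arctan_sub_arctan (lt_of_lt_of_le neg_one_lt_zero (by positivity))]
  congr 1
  have hden : 0 < lam * 2 * (γ - μ) + μ * (1 + lam) + lam * μ * (1 + lam) := by
    nlinarith [mul_pos hlam (sub_pos.2 hμγ), mul_pos hμ hlam, mul_pos (mul_pos hlam hμ) hlam]
  field_simp
  linear_combination (lam ^ 3 - lam) * hωsq

theorem stmt0_general (μ γ lam : ℝ) (hμ : 0 < μ) (hγμ : γ > μ)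
    (hlam0 : 0 < lam) (hlam1 : lam < 1)
    (r : ℝ) (hr : r = Real.sqrt (|(γ / μ) ^ 2 - 1|))
    (T : ℝ)
    (hT : T = (1 / (μ * r)) *
      Real.arctan (r * (1 - lam) / (2 * (lam / (1 + lam)) * (γ / μ - 1) + 1 + lam)))
    (φ : ℝ → ℝ) (hφ0 : φ 0 = lam⁻¹)
    (hode : ∀ τ ∈ Icc (0 : ℝ) T,
      HasDerivAt φ (-2 * μ * φ τ - γ * ((φ τ) ^ 2 + 1)) τ) :
    (∀ τ ∈ Icc (0 : ℝ) T, φ τ ∈ Icc lam lam⁻¹) ∧ φ T = lam := by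
  obtain ⟨hr0, hωsq⟩ : 0 < r ∧ (μ * r) ^ 2 = γ ^ 2 - μ ^ 2 := hr ▸ riccati_frequency_spec hμ hγμ
  have hω : μ * r ≠ 0 := (mul_pos hμ hr0).ne'
  have hT0 : 0 ≤ T := by
    rw [hT]
    have : 0 < 2 * (lam / (1 + lam)) * (γ / μ - 1) + 1 + lam := by
      have := sub_pos.2 ((one_lt_div hμ).2 hγμ); positivity
    exact mul_nonneg (by positivity) (arctan_pos.2 (by have := sub_pos.2 hlam1; positivity)).le
  have hφT : φ T = lam := by
    have hcons := arctan_riccati_add_eq hω hωsq hode T ⟨hT0, le_rfl⟩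
    have hT' : arctan ((γ * lam⁻¹ + μ) / (μ * r)) - (μ * r) * T =
        arctan ((γ * lam + μ) / (μ * r)) := by
      rw [hT, ← arctan_sub_arctan_riccati hμ hγμ hr0 hωsq hlam0]
      field_simp
      ring
    have harctan : arctan ((γ * φ T + μ) / (μ * r)) = arctan ((γ * lam + μ) / (μ * r)) := by
      rw [← hT', ← hφ0]
      field_simp at hcons ⊢
      linarith
    have hlin := (div_left_inj' hω).1 (arctan_injective harctan)
    exact mul_left_cancel₀ (hμ.trans hγμ).ne' (add_right_cancel hlin)
  have hanti := antitoneOn_of_riccati (abs_le.2 ⟨by linarith, hγμ.le⟩) hode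
  refine ⟨fun τ hτ => ⟨?_, ?_⟩, hφT⟩
  · exact hφT ▸ hanti hτ ⟨hT0, le_rfl⟩ hτ.2
  · exact hφ0 ▸ hanti ⟨le_rfl, hT0⟩ hτ hτ.1

/-- Lemma 1 (case γ > μ): the solution of φ' = -2μφ - γ(φ²+1) with φ(0) = λ⁻¹ stays in
[λ, λ⁻¹] on [0, T̃] and reaches λ at time T̃. -/
theorem stmt0 (μ γ lam : ℝ) (hμ : 0 < μ) (hγ : 0 < γ) (hγμ : γ > μ)
    (hlam0 : 0 < lam) (hlam1 : lam < 1)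
    (r : ℝ) (hr : r = Real.sqrt (|(γ / μ) ^ 2 - 1|))
    (T : ℝ)
    (hT : T = (1 / (μ * r)) *
      Real.arctan (r * (1 - lam) / (2 * (lam / (1 + lam)) * (γ / μ - 1) + 1 + lam)))
    (φ : ℝ → ℝ) (hφ0 : φ 0 = lam⁻¹)
    (hode : ∀ τ ∈ Icc (0 : ℝ) T,
      HasDerivAt φ (-2 * μ * φ τ - γ * ((φ τ) ^ 2 + 1)) τ) :
    (∀ τ ∈ Icc (0 : ℝ) T, φ τ ∈ Icc lam lam⁻¹) ∧ φ T = lam :=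
  stmt0_general μ γ lam hμ hγμ hlam0 hlam1 r hr T hT φ hφ0 hode
end

section
/- For fixed μ, γ > 0, the function λ ↦ T̃(μ, γ, λ) defined for λ ∈ (0,1) in the case γ > μ by T̃(μ,γ,λ) = (1/(μr))·arctan( r(1-λ) / ( 2(λ/(1+λ))(γ/μ - 1) + 1 + λ ) ) with r = √((γ/μ)² - 1), is strictly decreasing on (0,1), and T̃(μ, γ, λ) → 0 as λ → 1⁻. -/
open Real Set Filter

/-- For fixed μ, γ > 0 with γ > μ, the map λ ↦ T̃(μ,γ,λ) is strictly decreasing on (0,1)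
and tends to 0 as λ → 1⁻. -/
theorem stmt3 (μ γ : ℝ) (hμ : 0 < μ) (hγ : 0 < γ) (hγμ : γ > μ)
    (r : ℝ) (hr : r = Real.sqrt ((γ / μ) ^ 2 - 1))
    (T : ℝ → ℝ)
    (hT : ∀ lam, T lam = (1 / (μ * r)) *
      Real.arctan (r * (1 - lam) / (2 * (lam / (1 + lam)) * (γ / μ - 1) + 1 + lam))) :
    StrictAntiOn T (Ioo (0 : ℝ) 1) ∧
      Tendsto T (nhdsWithin 1 (Iio (1 : ℝ))) (nhds 0) := by
  have ha : 1 < γ / μ := (one_lt_div hμ).mpr hγμ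
  have hr2 : 0 < (γ / μ) ^ 2 - 1 := by nlinarith
  have hrpos : 0 < r := by rw [hr]; exact Real.sqrt_pos.mpr hr2
  have hc : 0 < 1 / (μ * r) := by positivity
  have hapos : 0 < γ / μ := by linarith
  have hf : ∀ l ∈ Ioo (0 : ℝ) 1,
      r * (1 - l) / (2 * (l / (1 + l)) * (γ / μ - 1) + 1 + l)
        = r * (1 - l ^ 2) / (l ^ 2 + 2 * (γ / μ) * l + 1) := by
    intro l hl
    obtain ⟨hl0, hl1⟩ := hl
    have h1 : (0 : ℝ) < 1 + l := by linarith
    have hd1 : 0 < 2 * (l / (1 + l)) * (γ / μ - 1) + 1 + l := by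
      have := div_pos hl0 h1
      nlinarith
    have hd2 : 0 < l ^ 2 + 2 * (γ / μ) * l + 1 := by positivity
    rw [div_eq_div_iff hd1.ne' hd2.ne']
    field_simp
    ring
  constructor
  · intro x hx y hy hxy
    rw [hT, hT]
    apply mul_lt_mul_of_pos_left _ hc
    apply Real.arctan_strictMono
    rw [hf x hx, hf y hy]
    obtain ⟨hx0, hx1⟩ := hx
    obtain ⟨hy0, hy1⟩ := hy
    have hdx : 0 < x ^ 2 + 2 * (γ / μ) * x + 1 := by positivity
    have hdy : 0 < y ^ 2 + 2 * (γ / μ) * y + 1 := by positivity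
    rw [div_lt_div_iff₀ hdy hdx]
    have key : (1 - y ^ 2) * (x ^ 2 + 2 * (γ / μ) * x + 1)
        < (1 - x ^ 2) * (y ^ 2 + 2 * (γ / μ) * y + 1) := by
      nlinarith [mul_pos (sub_pos.mpr hxy) (add_pos hx0 hy0),
        mul_pos (sub_pos.mpr hxy) (mul_pos hx0 hy0), sub_pos.mpr hxy]
    nlinarith [mul_lt_mul_of_pos_left key hrpos]
  · have hTeq : T = fun l => (1 / (μ * r)) *
        Real.arctan (r * (1 - l) / (2 * (l / (1 + l)) * (γ / μ - 1) + 1 + l)) :=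
      funext hT
    have hd1 : (2 * ((1:ℝ) / (1 + 1)) * (γ / μ - 1) + 1 + 1) ≠ 0 := by
      have : (2 * ((1:ℝ) / (1 + 1)) * (γ / μ - 1) + 1 + 1) = γ / μ + 1 := by ring
      rw [this]; positivity
    have hcont : ContinuousAt (fun l : ℝ => (1 / (μ * r)) *
        Real.arctan (r * (1 - l) / (2 * (l / (1 + l)) * (γ / μ - 1) + 1 + l))) 1 := by
      apply ContinuousAt.mul continuousAt_const
      apply Real.continuous_arctan.continuousAt.comp
      apply ContinuousAt.div
      · fun_prop
      · apply ContinuousAt.add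
        apply ContinuousAt.add
        apply ContinuousAt.mul
        apply ContinuousAt.mul continuousAt_const
        · exact ContinuousAt.div continuousAt_id (by fun_prop) (by norm_num)
        · exact continuousAt_const
        · exact continuousAt_const
        · exact continuousAt_id
      · exact hd1
    have hval : (1 / (μ * r)) *
        Real.arctan (r * (1 - (1:ℝ)) / (2 * ((1:ℝ) / (1 + 1)) * (γ / μ - 1) + 1 + 1)) = 0 := by
      norm_num
    rw [hTeq]
    refine tendsto_nhdsWithin_of_tendsto_nhds ?_
    have := hcont.tendsto
    simpa [hval] using this
end

section
/- Let S be a symmetric n×n real matrix and K₁, K₂ real matrices of size n×m. Suppose p ∈ ℝⁿ and q ∈ ℝᵐ satisfy the sector condition (p - K₁q)ᵀ S (p - K₂q) ≤ 0. Then the vector (q, p) ∈ ℝᵐ⁺ⁿ satisfies (q,p)ᵀ M (q,p) ≥ 0, where M is the block matrix with blocks M₁₁ = -K₁ᵀSK₂ - K₂ᵀSK₁, M₁₂ = (S(K₁+K₂))ᵀ, M₂₁ = S(K₁+K₂), M₂₂ = -2S. -/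
open Matrix

/-- Sector-bounded nonlinearity: if (p - K₁q)ᵀS(p - K₂q) ≤ 0, then the stacked vector
(q, p) satisfies (q,p)ᵀ M (q,p) ≥ 0, with M the associated multiplier matrix. -/
theorem stmt9 (n m : ℕ) (S : Matrix (Fin n) (Fin n) ℝ) (hS : S.IsSymm)
    (K₁ K₂ : Matrix (Fin n) (Fin m) ℝ)
    (q : Fin m → ℝ) (p : Fin n → ℝ)
    (hsector : (p - K₁.mulVec q) ⬝ᵥ S.mulVec (p - K₂.mulVec q) ≤ 0)
    (M : Matrix (Fin m ⊕ Fin n) (Fin m ⊕ Fin n) ℝ)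
    (hM : M = Matrix.fromBlocks
      (-(K₁ᵀ * S * K₂) - K₂ᵀ * S * K₁) ((S * (K₁ + K₂))ᵀ)
      (S * (K₁ + K₂)) (-(2 • S))) :
    0 ≤ (Sum.elim q p) ⬝ᵥ M.mulVec (Sum.elim q p) := by
  have symm : ∀ (a b : Fin n → ℝ), a ⬝ᵥ S.mulVec b = b ⬝ᵥ S.mulVec a := by
    intro a b
    rw [Matrix.dotProduct_mulVec, ← Matrix.mulVec_transpose, hS.eq, dotProduct_comm]
  set a := p ⬝ᵥ S.mulVec p with ha
  set b := p ⬝ᵥ S.mulVec (K₁.mulVec q) with hb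
  set c := p ⬝ᵥ S.mulVec (K₂.mulVec q) with hc
  set d := (K₁.mulVec q) ⬝ᵥ S.mulVec (K₂.mulVec q) with hd
  have h1 : q ⬝ᵥ ((K₁ᵀ * S * K₂).mulVec q) = d := by
    rw [hd, ← Matrix.mulVec_mulVec, ← Matrix.mulVec_mulVec, Matrix.dotProduct_mulVec,
      Matrix.vecMul_transpose]
  have h2 : q ⬝ᵥ ((K₂ᵀ * S * K₁).mulVec q) = d := by
    rw [hd, ← symm, ← Matrix.mulVec_mulVec, ← Matrix.mulVec_mulVec, Matrix.dotProduct_mulVec,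
      Matrix.vecMul_transpose]
  have h3 : q ⬝ᵥ ((S * (K₁ + K₂))ᵀ.mulVec p) = b + c := by
    rw [Matrix.dotProduct_mulVec, Matrix.vecMul_transpose, ← Matrix.mulVec_mulVec,
      Matrix.add_mulVec, Matrix.mulVec_add, dotProduct_comm, dotProduct_add]
  have h4 : p ⬝ᵥ ((S * (K₁ + K₂)).mulVec q) = b + c := by
    rw [← Matrix.mulVec_mulVec, Matrix.add_mulVec, Matrix.mulVec_add, dotProduct_add]
  have h5 : (p - K₁.mulVec q) ⬝ᵥ S.mulVec (p - K₂.mulVec q) = a - c - b + d := by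
    rw [Matrix.mulVec_sub, sub_dotProduct, dotProduct_sub, dotProduct_sub,
      symm (K₁.mulVec q) p]
    ring
  have key : (Sum.elim q p) ⬝ᵥ M.mulVec (Sum.elim q p) = -2 * (a - c - b + d) := by
    subst hM
    simp only [Matrix.fromBlocks_mulVec, sumElim_dotProduct_sumElim,
      Sum.elim_comp_inl, Sum.elim_comp_inr, Matrix.sub_mulVec, Matrix.neg_mulVec,
      dotProduct_add, dotProduct_sub, dotProduct_neg, dotProduct_smul,
      Matrix.smul_mulVec, h1, h2, h3, h4]
    rw [ha]
    ring
  rw [key, ← h5]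
  linarith
end

section
/- Let V : [t₀, ∞) → ℝ≥0 be a function, w : [t₀,∞) → ℝᵏ measurable and locally bounded, and c, ρ > 0. Suppose there exist times t₀ = t̂₀ ≤ ť₁ < t̂₁ < ť₂ < ⋯ such that on each interval (t̂ᵢ, ťᵢ₊₁] the function satisfies V(t) ≤ e^{-ρ(t - t̂ᵢ)}V(t̂ᵢ⁺) with V(t̂ᵢ⁺) ≤ c·sup_{τ∈[t₀,t̂ᵢ]}‖w(τ)‖² for i ≥ 1 and V(t̂₀⁺) = V(t₀), while on each (ťᵢ, t̂ᵢ], V(t) ≤ c·sup_{τ∈[t₀,t]}‖w(τ)‖². Then for all t ≥ t₀: V(t) ≤ max{ e^{-ρ(t-t₀)}V(t₀), c·sup_{τ∈[t₀,t]}‖w(τ)‖² }. -/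
open Real Set

/-- Interval-splitting ISS bound: if the timeline [t₀,∞) splits into intervals where V
decays exponentially from a level bounded by the disturbance, and intervals where V is
below the disturbance-dependent level, then V(t) ≤ max{e^{-ρ(t-t₀)}V(t₀), c·sup‖w‖²}. -/
theorem stmt17 (k : ℕ) (t₀ c ρ : ℝ) (hc : 0 < c) (hρ : 0 < ρ)
    (V : ℝ → ℝ) (hVnonneg : ∀ t, t₀ ≤ t → 0 ≤ V t)
    (w : ℝ → EuclideanSpace ℝ (Fin k))
    (hwbdd : ∀ t, t₀ ≤ t → BddAbove ((fun τ => ‖w τ‖ ^ 2) '' Icc t₀ t))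
    (that tcheck : ℕ → ℝ) (Vp : ℕ → ℝ)
    (h0 : that 0 = t₀)
    (ho1 : that 0 ≤ tcheck 1)
    (ho2 : ∀ i, 1 ≤ i → tcheck i < that i)
    (ho3 : ∀ i, 1 ≤ i → that i < tcheck (i + 1))
    (hVp0 : Vp 0 = V t₀)
    (hVpi : ∀ i, 1 ≤ i →
      Vp i ≤ c * (⨆ τ : Icc t₀ (that i), ‖w (τ : ℝ)‖ ^ 2))
    (hdecay : ∀ i, ∀ t ∈ Ioc (that i) (tcheck (i + 1)),
      V t ≤ Real.exp (-ρ * (t - that i)) * Vp i)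
    (hbelow : ∀ i, 1 ≤ i → ∀ t ∈ Ioc (tcheck i) (that i),
      V t ≤ c * (⨆ τ : Icc t₀ t, ‖w (τ : ℝ)‖ ^ 2))
    (hcover : ∀ t, t₀ < t →
      (∃ i, t ∈ Ioc (that i) (tcheck (i + 1))) ∨
      (∃ i, 1 ≤ i ∧ t ∈ Ioc (tcheck i) (that i))) :
    ∀ t, t₀ ≤ t →
      V t ≤ max (Real.exp (-ρ * (t - t₀)) * V t₀)
        (c * (⨆ τ : Icc t₀ t, ‖w (τ : ℝ)‖ ^ 2)) := by
  -- t₀ ≤ that i for all i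
  have hthat : ∀ i, t₀ ≤ that i := by
    intro i
    induction i with
    | zero => exact h0.ge
    | succ n ih =>
      rcases Nat.eq_zero_or_pos n with rfl | hn
      · exact le_trans (le_trans ih ho1) (ho2 1 le_rfl).le
      · exact le_trans ih (le_trans (ho3 n hn).le (ho2 (n + 1) (Nat.succ_le_succ (Nat.zero_le n))).le)
  -- sup facts
  have hsup_range : ∀ s : ℝ, (fun τ : Icc t₀ s => ‖w (τ : ℝ)‖ ^ 2) = (fun τ => ‖w τ‖ ^ 2) ∘ (Subtype.val) := by
    intro s; rfl
  have hsup_bdd : ∀ s : ℝ, t₀ ≤ s → BddAbove (Set.range fun τ : Icc t₀ s => ‖w (τ : ℝ)‖ ^ 2) := by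
    intro s hs
    have := hwbdd s hs
    rwa [Set.image_eq_range] at this
  have hsup_nonneg : ∀ s : ℝ, t₀ ≤ s → 0 ≤ ⨆ τ : Icc t₀ s, ‖w (τ : ℝ)‖ ^ 2 := by
    intro s hs
    have h1 : ‖w t₀‖ ^ 2 ≤ ⨆ τ : Icc t₀ s, ‖w (τ : ℝ)‖ ^ 2 :=
      le_ciSup (hsup_bdd s hs) ⟨t₀, le_refl t₀, hs⟩
    exact le_trans (by positivity) h1
  have hsup_mono : ∀ s t : ℝ, t₀ ≤ s → s ≤ t →
      (⨆ τ : Icc t₀ s, ‖w (τ : ℝ)‖ ^ 2) ≤ ⨆ τ : Icc t₀ t, ‖w (τ : ℝ)‖ ^ 2 := by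
    intro s t hs hst
    have hne : Nonempty (Icc t₀ s) := ⟨⟨t₀, le_refl t₀, hs⟩⟩
    refine ciSup_le fun τ => ?_
    exact le_ciSup (hsup_bdd t (hs.trans hst)) ⟨(τ : ℝ), τ.2.1, τ.2.2.trans hst⟩
  intro t ht
  rcases eq_or_lt_of_le ht with rfl | ht'
  · refine le_max_of_le_left ?_
    simp [hVnonneg t₀ le_rfl]
  rcases hcover t ht' with ⟨i, hi⟩ | ⟨i, hi1, hi⟩
  · -- decay interval
    have hd := hdecay i t hi
    rcases Nat.eq_zero_or_pos i with rfl | hipos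
    · refine le_max_of_le_left ?_
      rw [h0] at hd
      rw [hVp0] at hd
      exact hd
    · refine le_max_of_le_right ?_
      have hexp : Real.exp (-ρ * (t - that i)) ≤ 1 := by
        apply Real.exp_le_one_iff.mpr
        nlinarith [hi.1, hthat i]
      rcases le_or_gt (Vp i) 0 with hv | hv
      · have : Real.exp (-ρ * (t - that i)) * Vp i ≤ 0 :=
          mul_nonpos_of_nonneg_of_nonpos (Real.exp_pos _).le hv
        exact hd.trans (this.trans (mul_nonneg hc.le (hsup_nonneg t ht)))
      · have h1 : Real.exp (-ρ * (t - that i)) * Vp i ≤ Vp i := by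
          nlinarith [Real.exp_pos (-ρ * (t - that i))]
        have h2 := hVpi i hipos
        have h3 : c * (⨆ τ : Icc t₀ (that i), ‖w (τ : ℝ)‖ ^ 2) ≤
            c * ⨆ τ : Icc t₀ t, ‖w (τ : ℝ)‖ ^ 2 := by
          apply mul_le_mul_of_nonneg_left _ hc.le
          exact hsup_mono (that i) t (hthat i) (le_of_lt hi.1)
        linarith
  · exact le_max_of_le_right (hbelow i hi1 t hi)
end
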